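/- arXiv:1705.08426 — 5 statements merged into one kernel-verified Lean document; each statement's English description precedes it below -/
import Mathlib

section
/- If s ∈ W, then there exists a strategy g that is winning from s. -/
/-- The set `W` of winning states of the DFA game with transition function
`δ : S × 2^(X∪Y) → S` (a letter `X' ∪ Y'` with `X' ⊆ X`, `Y' ⊆ Y` is represented
by the pair of its two disjoint parts) and accepting states `F`: the least set
containing `F` and containing every state `s` for which there exists `Y' ⊆ Y`
such that `δ(s, X' ∪ Y') ∈ W` for every `X' ⊆ X`. -/
inductive Win {S X Y : Type} (δ : S → Set X → Set Y → S) (F : Set S) : S → Prop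
  | accept : ∀ s ∈ F, Win δ F s
  | step : ∀ (s : S) (Y' : Set Y), (∀ X' : Set X, Win δ F (δ s X' Y')) → Win δ F s

/-- The induced run of a strategy `g : (2^X)* → 2^Y` from state `s` on an
infinite input sequence `xs`:
`s'₀ = s`, `s'_{j+1} = δ(s'_j, X_j ∪ g(X₀,…,X_{j−1}))`. -/
def run {S X Y : Type} (δ : S → Set X → Set Y → S) (g : List (Set X) → Set Y)
    (s : S) (xs : ℕ → Set X) : ℕ → S
  | 0 => s
  | j + 1 => δ (run δ g s xs j) (xs j) (g (List.ofFn fun m : Fin j => xs m))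

/-! Induction on the derivation of `Win δ F s`. At an accepting state any strategy wins at once.
At a `step` state with move `Y'`, play `Y'` first and then, once the opponent has answered `X'`,
continue with a winning strategy for `δ s X' Y'` applied to the remaining history. -/

section Strategy

variable {S X Y : Type} (δ : S → Set X → Set Y → S)

def prependMove (Y' : Set Y) (next : Set X → List (Set X) → Set Y) : List (Set X) → Set Y
  | [] => Y'
  | x :: l => next x l

theorem run_succ_eq_run_tail (g : List (Set X) → Set Y) (s : S) (xs : ℕ → Set X) (k : ℕ) :
    run δ g s xs (k + 1) =
      run δ (fun l => g (xs 0 :: l)) (δ s (xs 0) (g [])) (fun i => xs (i + 1)) k := by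
  induction k with
  | zero => rfl
  | succ k ih =>
    rw [run, ih, run, List.ofFn_succ]
    rfl

theorem run_prependMove_succ (Y' : Set Y) (next : Set X → List (Set X) → Set Y) (s : S)
    (xs : ℕ → Set X) (k : ℕ) :
    run δ (prependMove Y' next) s xs (k + 1) =
      run δ (next (xs 0)) (δ s (xs 0) Y') (fun i => xs (i + 1)) k :=
  run_succ_eq_run_tail δ _ s xs k

end Strategy

theorem winning_state_has_winning_strategy_general {S X Y : Type}
    (δ : S → Set X → Set Y → S) (F : Set S) (s : S)
    (hW : Win δ F s) :
    ∃ g : List (Set X) → Set Y,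
      ∀ xs : ℕ → Set X, ∃ k : ℕ, run δ g s xs k ∈ F := by
  induction hW with
  | accept s hs => exact ⟨fun _ => ∅, fun _ => ⟨0, hs⟩⟩
  | step s Y' _ ih =>
    choose next hnext using ih
    refine ⟨prependMove Y' next, fun xs => ?_⟩
    obtain ⟨k, hk⟩ := hnext (xs 0) fun i => xs (i + 1)
    exact ⟨k + 1, by rwa [run_prependMove_succ]⟩

/-- If `s ∈ W`, then there exists a strategy `g` that is winning from `s`:
for every infinite sequence of inputs, the induced run of `g` from `s`
reaches an accepting state. -/
theorem winning_state_has_winning_strategy {S X Y : Type}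
    [Fintype S] [Fintype X] [Fintype Y]
    (δ : S → Set X → Set Y → S) (s₀ : S) (F : Set S) (s : S)
    (hW : Win δ F s) :
    ∃ g : List (Set X) → Set Y,
      ∀ xs : ℕ → Set X, ∃ k : ℕ, run δ g s xs k ∈ F :=
  winning_state_has_winning_strategy_general δ F s hW
end

section
/- If there exists a strategy g that is winning from a state s, then s ∈ W. -/
section Counterplay

variable {S X Y : Type} (δ : S → Set X → Set Y → S) (g : List (Set X) → Set Y)
  (f : S → Set Y → Set X) (s : S)

/-- The play of `g` against the positional counter-strategy `f`: after `n` rounds,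
the current state together with the inputs `X₀, …, X_{n-1}` chosen so far. -/
def counterplay : ℕ → S × List (Set X)
  | 0 => (s, [])
  | n + 1 =>
    let (t, h) := counterplay n
    (δ t (f t (g h)) (g h), h ++ [f t (g h)])

def counterplayInput (n : ℕ) : Set X :=
  f (counterplay δ g f s n).1 (g (counterplay δ g f s n).2)

theorem counterplay_succ (n : ℕ) :
    counterplay δ g f s (n + 1) =
      (δ (counterplay δ g f s n).1 (counterplayInput δ g f s n) (g (counterplay δ g f s n).2),
        (counterplay δ g f s n).2 ++ [counterplayInput δ g f s n]) :=
  rfl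

theorem counterplay_snd (n : ℕ) :
    (counterplay δ g f s n).2 = List.ofFn fun m : Fin n => counterplayInput δ g f s m := by
  induction n with
  | zero => rfl
  | succ n ih => rw [counterplay_succ, List.ofFn_succ', ih, List.concat_eq_append]; rfl

theorem run_counterplayInput (n : ℕ) :
    run δ g s (counterplayInput δ g f s) n = (counterplay δ g f s n).1 := by
  induction n with
  | zero => rfl
  | succ n ih => rw [run, ih, counterplay_succ, counterplay_snd]

theorem exists_forall_run_of_invariant {P : S → Prop}
    (hf : ∀ t Y', P t → P (δ t (f t Y') Y')) (hs : P s) :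
    ∃ xs : ℕ → Set X, ∀ n, P (run δ g s xs n) := by
  refine ⟨counterplayInput δ g f s, fun n => ?_⟩
  rw [run_counterplayInput]
  induction n with
  | zero => exact hs
  | succ n ih => exact hf _ _ ih

end Counterplay

theorem Win.exists_not_win_of_not_win {S X Y : Type} {δ : S → Set X → Set Y → S} {F : Set S}
    {t : S} (ht : ¬ Win δ F t) (Y' : Set Y) : ∃ X', ¬ Win δ F (δ t X' Y') := by
  by_contra! h
  exact ht (Win.step t Y' h)

theorem winning_strategy_implies_winning_state_general {S X Y : Type}
    (δ : S → Set X → Set Y → S) (F : Set S) (s : S)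
    (g : List (Set X) → Set Y)
    (hg : ∀ xs : ℕ → Set X, ∃ k : ℕ, run δ g s xs k ∈ F) :
    Win δ F s := by
  by_contra hs
  have hmove : ∀ t Y', ∃ X', ¬ Win δ F t → ¬ Win δ F (δ t X' Y') := fun t Y' => by
    by_cases ht : Win δ F t
    · exact ⟨∅, fun h => (h ht).elim⟩
    · obtain ⟨X', hX'⟩ := Win.exists_not_win_of_not_win ht Y'
      exact ⟨X', fun _ => hX'⟩
  choose f hf using hmove
  obtain ⟨xs, hxs⟩ := exists_forall_run_of_invariant δ g f s hf hs
  obtain ⟨k, hk⟩ := hg xs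
  exact hxs k (Win.accept _ hk)

/-- If there exists a strategy `g` that is winning from a state `s`, then
`s ∈ W`. -/
theorem winning_strategy_implies_winning_state {S X Y : Type}
    [Fintype S] [Fintype X] [Fintype Y]
    (δ : S → Set X → Set Y → S) (s₀ : S) (F : Set S) (s : S)
    (g : List (Set X) → Set Y)
    (hg : ∀ xs : ℕ → Set X, ∃ k : ℕ, run δ g s xs k ∈ F) :
    Win δ F s :=
  winning_strategy_implies_winning_state_general δ F s g hg
end

section
/- If s ∈ W, then there exists a strategy g such that for every infinite sequence X₀, X₁, … of subsets of X there exists k with 0 ≤ k ≤ |S| such that the state s'_k of the induced run of g from s belongs to F; that is, the controller can force acceptance within at most |S| steps. -/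
theorem Set.subset_of_monotone_of_stabilises {α : Type*} [Finite α] {A : ℕ → Set α}
    (hmono : Monotone A) (hstab : ∀ m, A m = A (m + 1) → A (m + 1) = A (m + 2)) (n : ℕ) :
    A n ⊆ A (Nat.card α) := by
  rcases le_total n (Nat.card α) with hn | hn
  · exact hmono hn
  have eq_of_ncard_eq {i j : ℕ} (hij : i ≤ j) (h : (A j).ncard = (A i).ncard) : A i = A j :=
    Set.eq_of_subset_of_ncard_le (hmono hij) h.le
  have hcard : (A n).ncard = (A (Nat.card α)).ncard :=
    Nat.stabilises_of_monotone (f := fun m => (A m).ncard)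
      (fun i j hij => Set.ncard_le_ncard (hmono hij)) (fun m => Set.ncard_le_card (A m))
      (fun m h => congrArg Set.ncard (hstab m (eq_of_ncard_eq m.le_succ h.symm))) hn
  exact (eq_of_ncard_eq hn hcard).ge

section

variable {S X Y : Type} {δ : S → Set X → Set Y → S} {F : Set S}

def controllablePre (δ : S → Set X → Set Y → S) (A : Set S) : Set S :=
  {s | ∃ Y', ∀ X', δ s X' Y' ∈ A}

def attractor (δ : S → Set X → Set Y → S) (F : Set S) : ℕ → Set S
  | 0 => F
  | n + 1 => attractor δ F n ∪ controllablePre δ (attractor δ F n)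

theorem attractor_mono : Monotone (attractor δ F) :=
  monotone_nat_of_le_succ fun _ => Set.subset_union_left

theorem controllablePre_subset_attractor_card [Finite S] :
    controllablePre δ (attractor δ F (Nat.card S)) ⊆ attractor δ F (Nat.card S) :=
  Set.subset_union_right.trans <|
    Set.subset_of_monotone_of_stabilises attractor_mono
      (fun _ h => congrArg (fun A => A ∪ controllablePre δ A) h) (Nat.card S + 1)

theorem Win.mem_attractor_card [Finite S] {s : S} (h : Win δ F s) :
    s ∈ attractor δ F (Nat.card S) := by
  induction h with
  | accept s hs => exact attractor_mono (Nat.zero_le _) hs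
  | step s Y' _ ih => exact controllablePre_subset_attractor_card ⟨Y', ih⟩

def strategyCons (Y' : Set Y) (h : Set X → List (Set X) → Set Y) : List (Set X) → Set Y
  | [] => Y'
  | X' :: l => h X' l

theorem run_strategyCons_succ (Y' : Set Y) (h : Set X → List (Set X) → Set Y) (s : S)
    (xs : ℕ → Set X) (k : ℕ) :
    run δ (strategyCons Y' h) s xs (k + 1) =
      run δ (h (xs 0)) (δ s (xs 0) Y') (fun j => xs (j + 1)) k := by
  induction k with
  | zero => rfl
  | succ k ih => rw [run, ih, List.ofFn_succ]; rfl

theorem exists_strategy_of_mem_attractor {n : ℕ} {s : S} (hs : s ∈ attractor δ F n) :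
    ∃ g : List (Set X) → Set Y, ∀ xs : ℕ → Set X, ∃ k ≤ n, run δ g s xs k ∈ F := by
  induction n generalizing s with
  | zero => exact ⟨fun _ => ∅, fun _ => ⟨0, le_rfl, hs⟩⟩
  | succ n ih =>
    rcases hs with hs | ⟨Y', hY'⟩
    · obtain ⟨g, hg⟩ := ih hs
      exact ⟨g, fun xs => (hg xs).imp fun k hk => ⟨hk.1.trans n.le_succ, hk.2⟩⟩
    · choose h hh using fun X' => ih (hY' X')
      refine ⟨strategyCons Y' h, fun xs => ?_⟩
      obtain ⟨k, hk, hkF⟩ := hh (xs 0) (fun j => xs (j + 1))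
      exact ⟨k + 1, Nat.succ_le_succ hk, (run_strategyCons_succ Y' h s xs k).symm ▸ hkF⟩

end

theorem winning_state_bounded_strategy_general {S X Y : Type}
    [Fintype S]
    (δ : S → Set X → Set Y → S) (F : Set S) (s : S)
    (hW : Win δ F s) :
    ∃ g : List (Set X) → Set Y,
      ∀ xs : ℕ → Set X, ∃ k : ℕ, k ≤ Fintype.card S ∧ run δ g s xs k ∈ F := by
  rw [← Nat.card_eq_fintype_card]
  exact exists_strategy_of_mem_attractor hW.mem_attractor_card

/-- If `s ∈ W`, then there exists a strategy `g` such that for every infinite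
input sequence there exists `k` with `0 ≤ k ≤ |S|` such that the state `s'_k`
of the induced run of `g` from `s` belongs to `F`: the controller can force
acceptance within at most `|S|` steps. -/
theorem winning_state_bounded_strategy {S X Y : Type}
    [Fintype S] [Fintype X] [Fintype Y]
    (δ : S → Set X → Set Y → S) (s₀ : S) (F : Set S) (s : S)
    (hW : Win δ F s) :
    ∃ g : List (Set X) → Set Y,
      ∀ xs : ℕ → Set X, ∃ k : ℕ, k ≤ Fintype.card S ∧ run δ g s xs k ∈ F :=
  winning_state_bounded_strategy_general δ F s hW
end

section
/- Let n be such that W_{n+1} = W_n, and let τ : S → 2^Y be any function such that (s, τ(s)) ∈ T_n for every s ∈ W_n. Then for every s ∈ W_n, the memoryless strategy g_τ defined by g_τ(X₀,…,X_{m−1}) = τ(s'_m), where s'₀ = s and s'_{j+1} = δ(s'_j, X_j ∪ τ(s'_j)), is winning from s. -/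
/-- The fixpoint approximants `(T_i, W_i)`:
`T₀ = F × 2^Y`, `W₀ = F`,
`T_{i+1} = T_i ∪ {(s, Y') : s ∉ W_i and δ(s, X' ∪ Y') ∈ W_i for every X' ⊆ X}`,
`W_{i+1} = {s : (s, Y') ∈ T_{i+1} for some Y' ⊆ Y}`. -/
def TW {S X Y : Type} (δ : S → Set X → Set Y → S) (F : Set S) :
    ℕ → Set (S × Set Y) × Set S
  | 0 => ({p | p.1 ∈ F}, F)
  | i + 1 =>
      let T := (TW δ F i).1
      let W := (TW δ F i).2
      let T' := T ∪ {p | p.1 ∉ W ∧ ∀ X' : Set X, δ p.1 X' p.2 ∈ W}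
      (T', {s | ∃ Y' : Set Y, (s, Y') ∈ T'})

/-- `T_i`. -/
def Tset {S X Y : Type} (δ : S → Set X → Set Y → S) (F : Set S) (i : ℕ) :
    Set (S × Set Y) := (TW δ F i).1

/-- `W_i`. -/
def Wset {S X Y : Type} (δ : S → Set X → Set Y → S) (F : Set S) (i : ℕ) :
    Set S := (TW δ F i).2

/-! A state of `W_{i+1}` either already lies in `W_i`, or every move from it under `τ` lands in
`W_i`; so along the run the least `i` with the current state in `W_i` strictly decreases until it
reaches `0`, i.e. the run enters `F = W_0`. The subtle point is that `τ` picks its move from `T_n`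
rather than from the stage at which the state first appears; but a pair `(t, Y')` is only added to
`T_{j+1}` while `t ∉ W_j`, so if `t ∈ W_i` the pair already lies in `T_i`. -/

section Attractor

variable {S X Y : Type} (δ : S → Set X → Set Y → S) (F : Set S)

theorem Tset_succ (i : ℕ) : Tset δ F (i + 1) =
    Tset δ F i ∪ {p | p.1 ∉ Wset δ F i ∧ ∀ X' : Set X, δ p.1 X' p.2 ∈ Wset δ F i} := rfl

theorem mem_Wset_iff {i : ℕ} {s : S} : s ∈ Wset δ F i ↔ ∃ Y' : Set Y, (s, Y') ∈ Tset δ F i := by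
  cases i with
  | zero => exact ⟨fun h => ⟨∅, h⟩, fun ⟨_, h⟩ => h⟩
  | succ i => exact Iff.rfl

theorem Tset_mono : Monotone (Tset δ F) :=
  monotone_nat_of_le_succ fun i => by rw [Tset_succ]; exact Set.subset_union_left

theorem Wset_mono : Monotone (Wset δ F) := fun _ _ hij _ hs => by
  obtain ⟨Y', hY'⟩ := (mem_Wset_iff δ F).mp hs
  exact (mem_Wset_iff δ F).mpr ⟨Y', Tset_mono δ F hij hY'⟩

theorem mem_Tset_of_mem_Wset {i j : ℕ} {t : S} {Y' : Set Y} (ht : t ∈ Wset δ F i)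
    (hT : (t, Y') ∈ Tset δ F j) : (t, Y') ∈ Tset δ F i := by
  induction j with
  | zero => exact Tset_mono δ F (Nat.zero_le i) hT
  | succ j ih =>
    rw [Tset_succ] at hT
    rcases hT with hT | hnew
    · exact ih hT
    · have hji : j < i := lt_of_not_ge fun hij => hnew.1 (Wset_mono δ F hij ht)
      exact Tset_mono δ F hji (by rw [Tset_succ]; exact Or.inr hnew)

def memorylessRun (τ : S → Set Y) (s : S) (xs : ℕ → Set X) : ℕ → S
  | 0 => s
  | k + 1 => δ (memorylessRun τ s xs k) (xs k) (τ (memorylessRun τ s xs k))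

theorem foldl_eq_memorylessRun (τ : S → Set Y) (s : S) (xs : ℕ → Set X) (k : ℕ) :
    (List.ofFn fun m : Fin k => xs m).foldl (fun t X' => δ t X' (τ t)) s =
      memorylessRun δ τ s xs k := by
  induction k with
  | zero => rfl
  | succ k ih =>
    simp only [List.ofFn_succ_last, List.foldl_concat, Fin.val_castSucc, Fin.val_last, ih]
    rfl

theorem run_eq_memorylessRun (τ : S → Set Y) (s : S) (xs : ℕ → Set X) (k : ℕ) :
    run δ (fun l => τ (l.foldl (fun t X' => δ t X' (τ t)) s)) s xs k =
      memorylessRun δ τ s xs k := by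
  induction k with
  | zero => rfl
  | succ k ih =>
    simp only [run, memorylessRun, foldl_eq_memorylessRun, ih]

theorem exists_memorylessRun_mem_of_mem_Wset {n : ℕ} {τ : S → Set Y}
    (hτ : ∀ t ∈ Wset δ F n, (t, τ t) ∈ Tset δ F n) {s : S} (hs : s ∈ Wset δ F n)
    (xs : ℕ → Set X) : ∃ k, memorylessRun δ τ s xs k ∈ F := by
  set r := memorylessRun δ τ s xs
  suffices h : ∀ i ≤ n, ∀ k, r k ∈ Wset δ F i → ∃ k', r k' ∈ F from h n le_rfl 0 hs
  intro i
  induction i with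
  | zero => exact fun _ k hk => ⟨k, hk⟩
  | succ i ih =>
    intro hin k hk
    have hτk : (r k, τ (r k)) ∈ Tset δ F (i + 1) :=
      mem_Tset_of_mem_Wset δ F hk (hτ _ (Wset_mono δ F hin hk))
    rw [Tset_succ] at hτk
    rcases hτk with hold | hnew
    · exact ih (Nat.le_of_succ_le hin) k ((mem_Wset_iff δ F).mpr ⟨_, hold⟩)
    · exact ih (Nat.le_of_succ_le hin) (k + 1) (hnew.2 (xs k))

end Attractor

theorem memoryless_strategy_winning_general {S X Y : Type}
    (δ : S → Set X → Set Y → S) (F : Set S) (n : ℕ)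
    (τ : S → Set Y) (hτ : ∀ s ∈ Wset δ F n, (s, τ s) ∈ Tset δ F n)
    (s : S) (hs : s ∈ Wset δ F n) :
    ∀ xs : ℕ → Set X, ∃ k : ℕ,
      run δ (fun l => τ (l.foldl (fun t X' => δ t X' (τ t)) s)) s xs k ∈ F := by
  intro xs
  simpa only [run_eq_memorylessRun] using exists_memorylessRun_mem_of_mem_Wset δ F hτ hs xs

/-- Let `n` be such that `W_{n+1} = W_n`, and let `τ : S → 2^Y` be any function
such that `(s, τ(s)) ∈ T_n` for every `s ∈ W_n`.  Then for every `s ∈ W_n`, the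
memoryless strategy `g_τ` defined by `g_τ(X₀,…,X_{m−1}) = τ(s'_m)`, where
`s'₀ = s` and `s'_{j+1} = δ(s'_j, X_j ∪ τ(s'_j))`, is winning from `s`. -/
theorem memoryless_strategy_winning {S X Y : Type}
    [Fintype S] [Fintype X] [Fintype Y]
    (δ : S → Set X → Set Y → S) (s₀ : S) (F : Set S) (n : ℕ)
    (hfix : Wset δ F (n + 1) = Wset δ F n)
    (τ : S → Set Y) (hτ : ∀ s ∈ Wset δ F n, (s, τ s) ∈ Tset δ F n)
    (s : S) (hs : s ∈ Wset δ F n) :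
    ∀ xs : ℕ → Set X, ∃ k : ℕ,
      run δ (fun l => τ (l.foldl (fun t X' => δ t X' (τ t)) s)) s xs k ∈ F :=
  memoryless_strategy_winning_general δ F n τ hτ s hs
end

section
/- Let φ be an LTLf formula over P = X ∪ Y and let G = (2^(X∪Y), S, s₀, δ, F) be a DFA such that s₀ ∉ F and G accepts exactly those nonempty finite words over 2^(X∪Y) which, viewed as finite traces over 2^P, satisfy φ. Then φ is realizable with respect to ⟨X, Y⟩ if and only if s₀ ∈ W. -/
/-- Syntax of LTLf formulas over atomic propositions `P`. -/
inductive LTLf (P : Type) : Type where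
  | tru : LTLf P
  | fls : LTLf P
  | atom : P → LTLf P
  | neg : LTLf P → LTLf P
  | conj : LTLf P → LTLf P → LTLf P
  | next : LTLf P → LTLf P
  | until_ : LTLf P → LTLf P → LTLf P

/-- Satisfaction of an LTLf formula on a finite trace `ρ` (a list of
propositional interpretations) at position `i`. -/
def Sat {P : Type} : LTLf P → List (Set P) → ℕ → Prop
  | .tru, _, _ => True
  | .fls, _, _ => False
  | .atom a, ρ, i => a ∈ ρ.getD i ∅
  | .neg φ, ρ, i => ¬ Sat φ ρ i
  | .conj φ ψ, ρ, i => Sat φ ρ i ∧ Sat ψ ρ i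
  | .next φ, ρ, i => i + 1 < ρ.length ∧ Sat φ ρ (i + 1)
  | .until_ φ ψ, ρ, i =>
      ∃ j, i ≤ j ∧ j < ρ.length ∧ Sat ψ ρ j ∧ ∀ k, i ≤ k → k < j → Sat φ ρ k

/-- Weak next: `Xw φ := ¬ X ¬ φ`. -/
def LTLf.wnext {P : Type} (φ : LTLf P) : LTLf P := .neg (.next (.neg φ))

/-- Release: `φ₁ R φ₂ := ¬ (¬ φ₁ U ¬ φ₂)`. -/
def LTLf.release {P : Type} (φ ψ : LTLf P) : LTLf P :=
  .neg (.until_ (.neg φ) (.neg ψ))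

/-- Eventually: `F φ := ⊤ U φ`. -/
def LTLf.ev {P : Type} (φ : LTLf P) : LTLf P := .until_ .tru φ

/-- Always: `G φ := ⊥ R φ`. -/
def LTLf.alw {P : Type} (φ : LTLf P) : LTLf P := LTLf.release .fls φ

/-- The letter `X' ∪ Y' ∈ 2^(X∪Y)` determined by `X' ⊆ X` and `Y' ⊆ Y`,
where the disjoint union `X ∪ Y` is represented by the sum type `X ⊕ Y`. -/
def join {X Y : Type} (X' : Set X) (Y' : Set Y) : Set (X ⊕ Y) :=
  {p | Sum.elim (· ∈ X') (· ∈ Y') p}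

/-- The set `W` of winning states of the DFA game on the DFA
`G = (2^(X∪Y), S, s₀, δ, F)`: the least set containing `F` and containing every
state `s` for which there exists `Y' ⊆ Y` such that `δ(s, X' ∪ Y') ∈ W`
for every `X' ⊆ X`. -/
inductive WinJ {S X Y : Type} (δ : S → Set (X ⊕ Y) → S) (F : Set S) : S → Prop
  | accept : ∀ s ∈ F, WinJ δ F s
  | step : ∀ (s : S) (Y' : Set Y), (∀ X' : Set X, WinJ δ F (δ s (join X' Y'))) →
      WinJ δ F s

/-!
A strategy wins from `s` iff every play consistent with it drives the DFA into `F`. If `s` is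
winning, induction on the derivation of `WinJ δ F s` builds such a strategy: a `step` rule
fixes the first output `Y'`, and after the environment's first move `X'` the strategy follows
the one obtained for `δ s (join X' Y')`. Conversely, the states that are not winning form a
trap: whatever `Y'` the agent plays, the environment has an `X'` keeping the DFA outside
`W ⊇ F`, so against any strategy it can avoid `F` forever. Since `s₀ ∉ F`, reaching `F` and
accepting a nonempty prefix of the play (that is, satisfying `φ`) are the same thing.
-/

namespace DFAGame

variable {S X Y : Type}

def history (xs : ℕ → Set X) (n : ℕ) : List (Set X) :=
  List.ofFn fun m : Fin n => xs m

def play (g : List (Set X) → Set Y) (xs : ℕ → Set X) (n : ℕ) : List (Set (X ⊕ Y)) :=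
  List.ofFn fun j : Fin n => join (xs j) (g (history xs j))

theorem play_succ_ne_nil (g : List (Set X) → Set Y) (xs : ℕ → Set X) (n : ℕ) :
    play g xs (n + 1) ≠ [] := by
  simp [play]

theorem play_succ (g : List (Set X) → Set Y) (xs : ℕ → Set X) (n : ℕ) :
    play g xs (n + 1) =
      join (xs 0) (g []) :: play (fun l => g (xs 0 :: l)) (fun i => xs (i + 1)) n := by
  simp [play, history, List.ofFn_succ]

variable (δ : S → Set (X ⊕ Y) → S) (F : Set S)

theorem exists_strategy_of_winJ {s : S} (hs : WinJ δ F s) :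
    ∃ g : List (Set X) → Set Y, ∀ xs, ∃ n, (play g xs n).foldl δ s ∈ F := by
  induction hs with
  | accept s hs => exact ⟨fun _ => ∅, fun _ => ⟨0, hs⟩⟩
  | step s Y' _ ih =>
    choose strategy hstrategy using ih
    refine ⟨fun | [] => Y' | x :: l => strategy x l, fun xs => ?_⟩
    obtain ⟨n, hn⟩ := hstrategy (xs 0) fun i => xs (i + 1)
    exact ⟨n + 1, by rwa [play_succ, List.foldl_cons]⟩

/-- The environment's moves against `g` from `s` when it answers the output `Y'` in state `t`
with `escape t Y'`. -/
def counterplay (escape : S → Set Y → Set X) (s : S) (g : List (Set X) → Set Y) :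
    ℕ → Set X
  | 0 => escape s (g [])
  | n + 1 =>
    let x := escape s (g [])
    counterplay escape (δ s (join x (g []))) (fun l => g (x :: l)) n

theorem foldl_play_counterplay_mem {L : Set S} (escape : S → Set Y → Set X)
    (hescape : ∀ t ∈ L, ∀ Y', δ t (join (escape t Y') Y') ∈ L) (n : ℕ) :
    ∀ s ∈ L, ∀ g, (play g (counterplay δ escape s g) n).foldl δ s ∈ L := by
  induction n with
  | zero => exact fun s hs _ => hs
  | succ n ih =>
    intro s hs g
    rw [play_succ, List.foldl_cons]
    exact ih _ (hescape s hs _) _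

theorem exists_escape_of_not_winJ {s : S} (hs : ¬ WinJ δ F s) (Y' : Set Y) :
    ∃ X' : Set X, ¬ WinJ δ F (δ s (join X' Y')) := by
  by_contra! h
  exact hs (WinJ.step s Y' h)

theorem winJ_of_exists_strategy {s : S}
    (h : ∃ g : List (Set X) → Set Y, ∀ xs, ∃ n, (play g xs n).foldl δ s ∈ F) :
    WinJ δ F s := by
  by_contra hs
  obtain ⟨g, hg⟩ := h
  choose! escape hescape using fun t (ht : ¬ WinJ δ F t) => exists_escape_of_not_winJ δ F ht
  obtain ⟨n, hn⟩ := hg (counterplay δ escape s g)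
  exact foldl_play_counterplay_mem δ escape hescape n s hs g (WinJ.accept _ hn)

theorem winJ_iff_exists_strategy (s : S) :
    WinJ δ F s ↔ ∃ g : List (Set X) → Set Y, ∀ xs, ∃ n, (play g xs n).foldl δ s ∈ F :=
  ⟨exists_strategy_of_winJ δ F, winJ_of_exists_strategy δ F⟩

theorem exists_sat_play_iff {φ : LTLf (X ⊕ Y)} {s₀ : S} (h₀ : s₀ ∉ F)
    (hacc : ∀ w : List (Set (X ⊕ Y)), w ≠ [] → (List.foldl δ s₀ w ∈ F ↔ Sat φ w 0))
    (g : List (Set X) → Set Y) (xs : ℕ → Set X) :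
    (∃ k, Sat φ (play g xs (k + 1)) 0) ↔ ∃ n, (play g xs n).foldl δ s₀ ∈ F := by
  constructor
  · rintro ⟨k, hk⟩
    exact ⟨k + 1, (hacc _ (play_succ_ne_nil g xs k)).2 hk⟩
  · rintro ⟨_ | k, hk⟩
    · exact absurd hk h₀
    · exact ⟨k, (hacc _ (play_succ_ne_nil g xs k)).1 hk⟩

end DFAGame

theorem ltlf_realizable_iff_initial_winning_general {S X Y : Type}
    (φ : LTLf (X ⊕ Y)) (δ : S → Set (X ⊕ Y) → S) (s₀ : S) (F : Set S)
    (h₀ : s₀ ∉ F)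
    (hacc : ∀ w : List (Set (X ⊕ Y)), w ≠ [] →
      (List.foldl δ s₀ w ∈ F ↔ Sat φ w 0)) :
    (∃ g : List (Set X) → Set Y, ∀ xs : ℕ → Set X, ∃ k : ℕ,
        Sat φ (List.ofFn fun j : Fin (k + 1) =>
          join (xs j) (g (List.ofFn fun m : Fin j.val => xs m))) 0) ↔
      WinJ δ F s₀ :=
  calc
    _ ↔ ∃ g : List (Set X) → Set Y, ∀ xs,
          ∃ n, (DFAGame.play g xs n).foldl δ s₀ ∈ F :=
      exists_congr fun g => forall_congr' fun xs => DFAGame.exists_sat_play_iff δ F h₀ hacc g xs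
    _ ↔ WinJ δ F s₀ := (DFAGame.winJ_iff_exists_strategy δ F s₀).symm

/-- Let `φ` be an LTLf formula over `P = X ∪ Y` (represented as `X ⊕ Y`) and
let `G = (2^(X∪Y), S, s₀, δ, F)` be a DFA such that `s₀ ∉ F` and `G` accepts
exactly those nonempty finite words over `2^(X∪Y)` which, viewed as finite
traces, satisfy `φ`.  Then `φ` is realizable with respect to `⟨X, Y⟩` if and
only if `s₀ ∈ W`. -/
theorem ltlf_realizable_iff_initial_winning {S X Y : Type}
    [Fintype S] [Fintype X] [Fintype Y]
    (φ : LTLf (X ⊕ Y)) (δ : S → Set (X ⊕ Y) → S) (s₀ : S) (F : Set S)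
    (h₀ : s₀ ∉ F)
    (hacc : ∀ w : List (Set (X ⊕ Y)), w ≠ [] →
      (List.foldl δ s₀ w ∈ F ↔ Sat φ w 0)) :
    (∃ g : List (Set X) → Set Y, ∀ xs : ℕ → Set X, ∃ k : ℕ,
        Sat φ (List.ofFn fun j : Fin (k + 1) =>
          join (xs j) (g (List.ofFn fun m : Fin j.val => xs m))) 0) ↔
      WinJ δ F s₀ :=
  ltlf_realizable_iff_initial_winning_general φ δ s₀ F h₀ hacc
end
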